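/- arXiv:2002.01882 — 4 statements merged into one kernel-verified Lean document; each statement's English description precedes it below -/
import Mathlib

section
/- Consider the sleeping-experts exponential-weights algorithm run for T rounds with parameter η > 0 on η-exp-concave losses. Then for every probability vector u = (u_1, …, u_M) (with u_i ≥ 0 and Σ_{i=1}^M u_i = 1), it holds that Σ_{t=1}^T U_t · ℓ_t(ŷ_t) − Σ_{t=1}^T Σ_{i ∈ 𝓔_t} u_i · ℓ_t(ŷ_{i,t}) ≤ (1/η) · Σ_{i=1}^M u_i · ln( u_i · (Σ_{j=1}^M w_{j,1}) / w_{i,1} ), where U_t = Σ_{i ∈ 𝓔_t} u_i and the convention 0 · ln 0 = 0 is used. -/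
/-!
STATEMENT 0: Regret bound for the sleeping-experts exponential-weights algorithm
(Freund et al. 1997) with η-exp-concave losses.
-/

open Finset

/-- Gibbs' inequality (one direction), for `q` positive with total mass at most 1. -/
lemma gibbs_aux {M : ℕ} (u q : Fin M → ℝ) (hu : ∀ i, 0 ≤ u i) (husum : ∑ i, u i = 1)
    (hq : ∀ i, 0 < q i) (hqsum : ∑ i, q i ≤ 1) :
    ∑ i, u i * Real.log (q i) ≤ ∑ i, u i * Real.log (u i) := by
  have h : ∀ i : Fin M, u i * Real.log (q i) - u i * Real.log (u i) ≤ q i - u i := by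
    intro i
    rcases eq_or_lt_of_le (hu i) with h0 | h0
    · simp only [← h0, zero_mul, sub_zero, sub_self]
      exact (hq i).le
    · have hlog := Real.log_le_sub_one_of_pos (div_pos (hq i) h0)
      have h2 : u i * Real.log (q i / u i) ≤ u i * (q i / u i - 1) :=
        mul_le_mul_of_nonneg_left hlog h0.le
      rw [Real.log_div (hq i).ne' h0.ne'] at h2
      have h3 : u i * (q i / u i - 1) = q i - u i := by
        field_simp
      nlinarith [h2, h3]
  have hsum : ∑ i, (u i * Real.log (q i) - u i * Real.log (u i)) ≤ ∑ i, (q i - u i) :=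
    Finset.sum_le_sum fun i _ => h i
  rw [Finset.sum_sub_distrib, Finset.sum_sub_distrib, husum] at hsum
  linarith

theorem sleeping_experts_ewa_regret
    (M T : ℕ) (η : ℝ) (hη : 0 < η)
    (C : Set ℝ) (hC : Convex ℝ C)
    -- awake experts at each round
    (E : Fin T → Finset (Fin M)) (hE : ∀ t, (E t).Nonempty)
    -- predictions of awake experts, lying in C
    (yhat : Fin T → Fin M → ℝ) (hyhatC : ∀ t, ∀ i ∈ E t, yhat t i ∈ C)
    -- losses, η-exp-concave on C
    (loss : Fin T → ℝ → ℝ)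
    (hconc : ∀ t, ConcaveOn ℝ C (fun y => Real.exp (-η * loss t y)))
    -- weights: positive initialization and exponential-weights update on awake experts
    (w : ℕ → Fin M → ℝ) (hw0 : ∀ i, 0 < w 0 i)
    (hupd : ∀ t : Fin T, ∀ i : Fin M,
      w ((t : ℕ) + 1) i =
        if i ∈ E t then
          w (t : ℕ) i * Real.exp (-η * loss t (yhat t i)) *
            (∑ j ∈ E t, w (t : ℕ) j) /
            (∑ j ∈ E t, w (t : ℕ) j * Real.exp (-η * loss t (yhat t j)))
        else w (t : ℕ) i)
    -- aggregated prediction of the algorithm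
    (p : Fin T → ℝ)
    (hp : ∀ t : Fin T,
      p t = (∑ i ∈ E t, w (t : ℕ) i * yhat t i) / (∑ i ∈ E t, w (t : ℕ) i))
    -- probability vector u
    (u : Fin M → ℝ) (hu : ∀ i, 0 ≤ u i) (husum : ∑ i, u i = 1) :
    ∑ t : Fin T, (∑ i ∈ E t, u i) * loss t (p t)
      - ∑ t : Fin T, ∑ i ∈ E t, u i * loss t (yhat t i)
      ≤ (1 / η) * ∑ i : Fin M, u i * Real.log (u i * (∑ j : Fin M, w 0 j) / w 0 i) := by
  -- positivity of all relevant weights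
  have hwpos : ∀ n : ℕ, n ≤ T → ∀ i, 0 < w n i := by
    intro n
    induction n with
    | zero => exact fun _ => hw0
    | succ n ih =>
      intro hn i
      have hn' : n < T := Nat.lt_of_succ_le hn
      have ihn := ih (le_of_lt hn')
      have Hu := hupd ⟨n, hn'⟩ i
      simp only [Fin.val_mk] at Hu
      rw [Hu]
      by_cases hi : i ∈ E ⟨n, hn'⟩
      · rw [if_pos hi]
        have hS : 0 < ∑ j ∈ E ⟨n, hn'⟩, w n j :=
          Finset.sum_pos (fun j _ => ihn j) (hE _)
        have hS' : 0 < ∑ j ∈ E ⟨n, hn'⟩, w n j * Real.exp (-η * loss ⟨n, hn'⟩ (yhat ⟨n, hn'⟩ j)) :=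
          Finset.sum_pos (fun j _ => mul_pos (ihn j) (Real.exp_pos _)) (hE _)
        exact div_pos (mul_pos (mul_pos (ihn i) (Real.exp_pos _)) hS) hS'
      · rw [if_neg hi]; exact ihn i
  have hwposT : ∀ t : Fin T, ∀ i, 0 < w (t : ℕ) i := fun t i => hwpos t t.2.le i
  -- positivity of the awake sums
  have hS : ∀ t : Fin T, 0 < ∑ j ∈ E t, w (t : ℕ) j :=
    fun t => Finset.sum_pos (fun j _ => hwposT t j) (hE t)
  have hS' : ∀ t : Fin T, 0 < ∑ j ∈ E t, w (t : ℕ) j * Real.exp (-η * loss t (yhat t j)) :=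
    fun t => Finset.sum_pos (fun j _ => mul_pos (hwposT t j) (Real.exp_pos _)) (hE t)
  -- invariance of the total mass
  have hinv : ∀ t : Fin T, ∑ j : Fin M, w ((t : ℕ) + 1) j = ∑ j : Fin M, w (t : ℕ) j := by
    intro t
    have h1 : ∑ j ∈ E t, w ((t : ℕ) + 1) j = ∑ j ∈ E t, w (t : ℕ) j := by
      have hcg : ∀ j ∈ E t, w ((t : ℕ) + 1) j =
          w (t : ℕ) j * Real.exp (-η * loss t (yhat t j)) * (∑ k ∈ E t, w (t : ℕ) k) /
            (∑ k ∈ E t, w (t : ℕ) k * Real.exp (-η * loss t (yhat t k))) :=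
        fun j hj => by rw [hupd t j, if_pos hj]
      rw [Finset.sum_congr rfl hcg, ← Finset.sum_div, ← Finset.sum_mul, mul_comm,
        mul_div_assoc, div_self (hS' t).ne', mul_one]
    have h2 : ∑ j ∈ (E t)ᶜ, w ((t : ℕ) + 1) j = ∑ j ∈ (E t)ᶜ, w (t : ℕ) j :=
      Finset.sum_congr rfl fun j hj => by
        rw [hupd t j, if_neg (Finset.mem_compl.mp hj)]
    rw [← Finset.sum_add_sum_compl (E t) (w ((t : ℕ) + 1)),
      ← Finset.sum_add_sum_compl (E t) (w (t : ℕ)), h1, h2]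
  -- total mass is constant
  have htot : ∀ n : ℕ, n ≤ T → ∑ j : Fin M, w n j = ∑ j : Fin M, w 0 j := by
    intro n
    induction n with
    | zero => intro _; rfl
    | succ n ih =>
      intro hn
      have hn' : n < T := Nat.lt_of_succ_le hn
      have := hinv ⟨n, hn'⟩
      simp only [Fin.val_mk] at this
      rw [this, ih (le_of_lt hn')]
  -- per-round per-expert log-weight inequality
  have hstep : ∀ t : Fin T, ∀ i : Fin M,
      (if i ∈ E t then η * (loss t (p t) - loss t (yhat t i)) else 0)
        ≤ Real.log (w ((t : ℕ) + 1) i) - Real.log (w (t : ℕ) i) := by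
    intro t i
    by_cases hi : i ∈ E t
    · rw [if_pos hi]
      -- Jensen step: S'/S ≤ exp(-η loss(p t))
      have h0 : ∀ j ∈ E t, (0:ℝ) ≤ w (t : ℕ) j / (∑ k ∈ E t, w (t : ℕ) k) :=
        fun j _ => div_nonneg (hwposT t j).le (hS t).le
      have h1 : ∑ j ∈ E t, w (t : ℕ) j / (∑ k ∈ E t, w (t : ℕ) k) = 1 := by
        rw [← Finset.sum_div, div_self (hS t).ne']
      have hjensen := (hconc t).le_map_sum h0 h1 (fun j hj => hyhatC t j hj)
      have hpt : ∑ j ∈ E t, (w (t : ℕ) j / (∑ k ∈ E t, w (t : ℕ) k)) • yhat t j = p t := by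
        rw [hp t, Finset.sum_div]
        exact Finset.sum_congr rfl fun j _ => by
          rw [smul_eq_mul, div_mul_eq_mul_div]
      rw [hpt] at hjensen
      have hratio : (∑ j ∈ E t, w (t : ℕ) j * Real.exp (-η * loss t (yhat t j))) /
          (∑ k ∈ E t, w (t : ℕ) k) ≤ Real.exp (-η * loss t (p t)) := by
        rw [Finset.sum_div]
        refine le_trans (le_of_eq (Finset.sum_congr rfl fun j _ => ?_)) hjensen
        rw [smul_eq_mul, div_mul_eq_mul_div]
      have hlog : Real.log (∑ j ∈ E t, w (t : ℕ) j * Real.exp (-η * loss t (yhat t j)))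
          - Real.log (∑ k ∈ E t, w (t : ℕ) k) ≤ -η * loss t (p t) := by
        have := Real.log_le_log (div_pos (hS' t) (hS t)) hratio
        rwa [Real.log_div (hS' t).ne' (hS t).ne', Real.log_exp] at this
      have hwlog : Real.log (w ((t : ℕ) + 1) i) =
          Real.log (w (t : ℕ) i) + (-η * loss t (yhat t i))
            + Real.log (∑ k ∈ E t, w (t : ℕ) k)
            - Real.log (∑ j ∈ E t, w (t : ℕ) j * Real.exp (-η * loss t (yhat t j))) := by
        rw [hupd t i, if_pos hi,
          Real.log_div (mul_pos (mul_pos (hwposT t i) (Real.exp_pos _)) (hS t)).ne' (hS' t).ne',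
          Real.log_mul (mul_pos (hwposT t i) (Real.exp_pos _)).ne' (hS t).ne',
          Real.log_mul (hwposT t i).ne' (Real.exp_pos _).ne', Real.log_exp]
      rw [hwlog]
      nlinarith [hlog]
    · rw [if_neg hi, hupd t i, if_neg hi]
      simp
  -- telescoping over rounds
  have htel : ∀ i : Fin M,
      ∑ t : Fin T, (if i ∈ E t then η * (loss t (p t) - loss t (yhat t i)) else 0)
        ≤ Real.log (w T i) - Real.log (w 0 i) := by
    intro i
    calc ∑ t : Fin T, (if i ∈ E t then η * (loss t (p t) - loss t (yhat t i)) else 0)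
        ≤ ∑ t : Fin T, (Real.log (w ((t : ℕ) + 1) i) - Real.log (w (t : ℕ) i)) :=
          Finset.sum_le_sum fun t _ => hstep t i
      _ = ∑ n ∈ Finset.range T, (Real.log (w (n + 1) i) - Real.log (w n i)) :=
          Fin.sum_univ_eq_sum_range (fun n => Real.log (w (n + 1) i) - Real.log (w n i)) T
      _ = Real.log (w T i) - Real.log (w 0 i) :=
          Finset.sum_range_sub (fun n => Real.log (w n i)) T
  -- combine with the weights u
  have hcomb : η * (∑ t : Fin T, (∑ i ∈ E t, u i) * loss t (p t)
        - ∑ t : Fin T, ∑ i ∈ E t, u i * loss t (yhat t i))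
      ≤ ∑ i : Fin M, u i * (Real.log (w T i) - Real.log (w 0 i)) := by
    have h1 : ∑ i : Fin M, u i *
          (∑ t : Fin T, (if i ∈ E t then η * (loss t (p t) - loss t (yhat t i)) else 0))
        ≤ ∑ i : Fin M, u i * (Real.log (w T i) - Real.log (w 0 i)) :=
      Finset.sum_le_sum fun i _ => mul_le_mul_of_nonneg_left (htel i) (hu i)
    refine le_trans (le_of_eq ?_) h1
    simp_rw [Finset.mul_sum, mul_ite, mul_zero]
    rw [Finset.sum_comm]
    have h2 : ∀ t : Fin T,
        (∑ i : Fin M, if i ∈ E t then u i * (η * (loss t (p t) - loss t (yhat t i))) else 0)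
          = η * ((∑ i ∈ E t, u i) * loss t (p t) - ∑ i ∈ E t, u i * loss t (yhat t i)) := by
      intro t
      rw [Finset.sum_ite_mem, Finset.univ_inter, mul_sub, Finset.sum_mul,
        Finset.mul_sum, Finset.mul_sum, ← Finset.sum_sub_distrib]
      exact Finset.sum_congr rfl fun i _ => by ring
    rw [Finset.sum_congr rfl fun t _ => h2 t, ← Finset.mul_sum, ← Finset.sum_sub_distrib]
  -- Gibbs step
  have hM : (Finset.univ : Finset (Fin M)).Nonempty := by
    by_contra h
    rw [Finset.not_nonempty_iff_eq_empty] at h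
    rw [h, Finset.sum_empty] at husum
    norm_num at husum
  have hW : 0 < ∑ j : Fin M, w 0 j := Finset.sum_pos (fun j _ => hw0 j) hM
  have hWT : ∑ j : Fin M, w T j = ∑ j : Fin M, w 0 j := htot T le_rfl
  have hgibbs : ∑ i : Fin M, u i * Real.log (w T i / ∑ j : Fin M, w 0 j)
      ≤ ∑ i : Fin M, u i * Real.log (u i) := by
    refine gibbs_aux u (fun i => w T i / ∑ j : Fin M, w 0 j) hu husum
      (fun i => div_pos (hwpos T le_rfl i) hW) ?_
    rw [← Finset.sum_div, hWT, div_self hW.ne']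
  -- put everything together
  have hfinal : ∑ i : Fin M, u i * (Real.log (w T i) - Real.log (w 0 i))
      ≤ ∑ i : Fin M, u i * Real.log (u i * (∑ j : Fin M, w 0 j) / w 0 i) := by
    have hlhs : ∑ i : Fin M, u i * (Real.log (w T i) - Real.log (w 0 i))
        = ∑ i : Fin M, u i * Real.log (w T i / ∑ j : Fin M, w 0 j)
          + ∑ i : Fin M, u i * (Real.log (∑ j : Fin M, w 0 j) - Real.log (w 0 i)) := by
      rw [← Finset.sum_add_distrib]
      refine Finset.sum_congr rfl fun i _ => ?_
      rw [Real.log_div (hwpos T le_rfl i).ne' hW.ne']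
      ring
    have hrhs : ∑ i : Fin M, u i * Real.log (u i)
          + ∑ i : Fin M, u i * (Real.log (∑ j : Fin M, w 0 j) - Real.log (w 0 i))
        = ∑ i : Fin M, u i * Real.log (u i * (∑ j : Fin M, w 0 j) / w 0 i) := by
      rw [← Finset.sum_add_distrib]
      refine Finset.sum_congr rfl fun i _ => ?_
      rcases eq_or_lt_of_le (hu i) with h0 | h0
      · simp [← h0]
      · rw [Real.log_div (by positivity) (hw0 i).ne',
          Real.log_mul h0.ne' hW.ne']
        ring
    rw [hlhs, ← hrhs]
    linarith [hgibbs]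
  have hmain := le_trans hcomb hfinal
  rw [one_div, inv_mul_eq_div, le_div_iff₀ hη]
  linarith [hmain]
end

section
/- Consider a single round of the sleeping-experts exponential-weights update with parameter η > 0: given a nonempty awake set 𝓔 ⊆ {1, …, M}, weights w_i > 0, expert predictions ŷ_i ∈ C for i ∈ 𝓔, an η-exp-concave loss ℓ : C → ℝ (i.e., y ↦ exp(−η ℓ(y)) is concave on the convex set C ⊆ ℝ), the aggregate prediction ŷ = (Σ_{i ∈ 𝓔} w_i ŷ_i)/(Σ_{i ∈ 𝓔} w_i), and updated weights w'_i = w_i · e^{−η ℓ(ŷ_i)} · (Σ_{j ∈ 𝓔} w_j)/(Σ_{j ∈ 𝓔} w_j e^{−η ℓ(ŷ_j)}) for i ∈ 𝓔. Then for every probability vector u = (u_1, …, u_M), letting U = Σ_{i ∈ 𝓔} u_i, one has Σ_{i ∈ 𝓔} u_i · ln(w'_i / w_i) ≥ −η Σ_{i ∈ 𝓔} u_i ℓ(ŷ_i) + η · U · ℓ(ŷ). -/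
/-!
The update multiplies every awake weight by `exp (-η ℓ(ŷᵢ))` and then renormalises by the common
factor `W / Z`, where `W = ∑ wⱼ` and `Z = ∑ wⱼ exp (-η ℓ(ŷⱼ))`; hence
`log (w'ᵢ / wᵢ) = -η ℓ(ŷᵢ) + log (W / Z)`. Jensen's inequality for the concave function
`exp (-η ℓ)` at the weighted mean `ŷ` gives `Z / W ≤ exp (-η ℓ(ŷ))`, i.e. `η ℓ(ŷ) ≤ log (W / Z)`,
and averaging against `u` over the awake set yields the bound.
-/

open Finset Real

theorem mul_loss_centerMass_le_log_sum_div_sum_mul_exp {ι : Type*} {s : Finset ι} {w y : ι → ℝ}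
    {C : Set ℝ} {η : ℝ} {loss : ℝ → ℝ}
    (hconc : ConcaveOn ℝ C (fun y => exp (-η * loss y)))
    (hw₀ : ∀ i ∈ s, 0 ≤ w i) (hw : 0 < ∑ i ∈ s, w i) (hy : ∀ i ∈ s, y i ∈ C) :
    η * loss (s.centerMass w y) ≤
      log ((∑ i ∈ s, w i) / ∑ i ∈ s, w i * exp (-η * loss (y i))) := by
  have hZ : 0 < ∑ i ∈ s, w i * exp (-η * loss (y i)) := by
    obtain ⟨i, hi, hwi⟩ := exists_lt_of_sum_lt (s := s) (f := 0) (g := w) (by simpa using hw)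
    exact sum_pos' (fun j hj => mul_nonneg (hw₀ j hj) (exp_pos _).le)
      ⟨i, hi, mul_pos hwi (exp_pos _)⟩
  have hjensen := hconc.le_map_centerMass hw₀ hw hy
  have hmix : s.centerMass w (fun i => exp (-η * loss (y i))) =
      (∑ i ∈ s, w i * exp (-η * loss (y i))) / ∑ i ∈ s, w i := by
    simp only [centerMass, smul_eq_mul, inv_mul_eq_div]
  rw [Function.comp_def, hmix, ← log_le_log_iff (div_pos hZ hw) (exp_pos _), log_exp,
    ← inv_div, log_inv] at hjensen
  linarith

theorem sleeping_experts_one_round_potential_general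
    (M : ℕ) (η : ℝ)
    (C : Set ℝ)
    (𝓔 : Finset (Fin M)) (h𝓔 : 𝓔.Nonempty)
    (w : Fin M → ℝ) (hw : ∀ i, 0 < w i)
    (yhat : Fin M → ℝ) (hyhatC : ∀ i ∈ 𝓔, yhat i ∈ C)
    (loss : ℝ → ℝ)
    (hconc : ConcaveOn ℝ C (fun y => Real.exp (-η * loss y)))
    -- aggregate prediction
    (ypred : ℝ) (hypred : ypred = (∑ i ∈ 𝓔, w i * yhat i) / (∑ i ∈ 𝓔, w i))
    -- updated weights on the awake set
    (w' : Fin M → ℝ)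
    (hw' : ∀ i ∈ 𝓔,
      w' i = w i * Real.exp (-η * loss (yhat i)) * (∑ j ∈ 𝓔, w j) /
        (∑ j ∈ 𝓔, w j * Real.exp (-η * loss (yhat j))))
    -- probability vector u
    (u : Fin M → ℝ) (hu : ∀ i, 0 ≤ u i) :
    ∑ i ∈ 𝓔, u i * Real.log (w' i / w i)
      ≥ -η * ∑ i ∈ 𝓔, u i * loss (yhat i) + η * (∑ i ∈ 𝓔, u i) * loss ypred := by
  set W := ∑ j ∈ 𝓔, w j
  set Z := ∑ j ∈ 𝓔, w j * exp (-η * loss (yhat j))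
  have hW : 0 < W := sum_pos (fun i _ => hw i) h𝓔
  have hZ : 0 < Z := sum_pos (fun i _ => mul_pos (hw i) (exp_pos _)) h𝓔
  have hlog_ratio : ∀ i ∈ 𝓔, log (w' i / w i) = -η * loss (yhat i) + log (W / Z) := by
    intro i hi
    have hratio : w' i / w i = exp (-η * loss (yhat i)) * (W / Z) := by
      rw [hw' i hi]
      field_simp [(hw i).ne']
    rw [hratio, log_mul (exp_pos _).ne' (div_pos hW hZ).ne', log_exp]
  have hmix : η * loss ypred ≤ log (W / Z) := by
    have hcenter : ypred = 𝓔.centerMass w yhat := by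
      simp only [hypred, W, centerMass, smul_eq_mul, inv_mul_eq_div]
    rw [hcenter]
    exact mul_loss_centerMass_le_log_sum_div_sum_mul_exp hconc (fun i _ => (hw i).le) hW hyhatC
  have hU : 0 ≤ ∑ i ∈ 𝓔, u i := sum_nonneg fun i _ => hu i
  calc ∑ i ∈ 𝓔, u i * log (w' i / w i)
      = -η * ∑ i ∈ 𝓔, u i * loss (yhat i) + (∑ i ∈ 𝓔, u i) * log (W / Z) := by
        rw [sum_congr rfl fun i hi => by rw [hlog_ratio i hi], mul_sum, sum_mul, ← sum_add_distrib]
        exact sum_congr rfl fun i _ => by ring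
    _ ≥ -η * ∑ i ∈ 𝓔, u i * loss (yhat i) + η * (∑ i ∈ 𝓔, u i) * loss ypred := by
        nlinarith [mul_le_mul_of_nonneg_left hmix hU]

theorem sleeping_experts_one_round_potential
    (M : ℕ) (η : ℝ) (hη : 0 < η)
    (C : Set ℝ) (hC : Convex ℝ C)
    (𝓔 : Finset (Fin M)) (h𝓔 : 𝓔.Nonempty)
    (w : Fin M → ℝ) (hw : ∀ i, 0 < w i)
    (yhat : Fin M → ℝ) (hyhatC : ∀ i ∈ 𝓔, yhat i ∈ C)
    (loss : ℝ → ℝ)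
    (hconc : ConcaveOn ℝ C (fun y => Real.exp (-η * loss y)))
    -- aggregate prediction
    (ypred : ℝ) (hypred : ypred = (∑ i ∈ 𝓔, w i * yhat i) / (∑ i ∈ 𝓔, w i))
    -- updated weights on the awake set
    (w' : Fin M → ℝ)
    (hw' : ∀ i ∈ 𝓔,
      w' i = w i * Real.exp (-η * loss (yhat i)) * (∑ j ∈ 𝓔, w j) /
        (∑ j ∈ 𝓔, w j * Real.exp (-η * loss (yhat j))))
    -- probability vector u
    (u : Fin M → ℝ) (hu : ∀ i, 0 ≤ u i) (husum : ∑ i, u i = 1) :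
    ∑ i ∈ 𝓔, u i * Real.log (w' i / w i)
      ≥ -η * ∑ i ∈ 𝓔, u i * loss (yhat i) + η * (∑ i ∈ 𝓔, u i) * loss ypred :=
  sleeping_experts_one_round_potential_general M η C 𝓔 h𝓔 w hw yhat hyhatC loss hconc ypred hypred
    w' hw' u hu
end

section
/- Run the sleeping-experts exponential-weights algorithm for T rounds with parameter η > 0, initial weights w_{i,1} = 1 for every i, on η-exp-concave losses. Let M_T = |𝓔_1 ∪ ⋯ ∪ 𝓔_T| be the number of distinct experts ever awake, and let S ⊆ 𝓔_1 ∪ ⋯ ∪ 𝓔_T be a nonempty set of experts such that for every round t exactly one element of S is awake, i.e., |𝓔_t ∩ S| = 1; denote by i_t the unique element of 𝓔_t ∩ S. Then Σ_{t=1}^T ( ℓ_t(ŷ_t) − ℓ_t(ŷ_{i_t,t}) ) ≤ (|S|/η) · ln( M_T / |S| ). -/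
/-!
STATEMENT 3: Regret bound of the sleeping-experts exponential-weights algorithm
(initialized with unit weights) against a pruning: a set S of experts such that
exactly one element of S is awake at every round.
-/

open Finset

theorem sleeping_experts_tree_regret
    (M T : ℕ) (η : ℝ) (hη : 0 < η)
    (C : Set ℝ) (hC : Convex ℝ C)
    (E : Fin T → Finset (Fin M)) (hE : ∀ t, (E t).Nonempty)
    (yhat : Fin T → Fin M → ℝ) (hyhatC : ∀ t, ∀ i ∈ E t, yhat t i ∈ C)
    (loss : Fin T → ℝ → ℝ)
    (hconc : ∀ t, ConcaveOn ℝ C (fun y => Real.exp (-η * loss t y)))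
    -- weights: all-ones initialization and exponential-weights update on awake experts
    (w : ℕ → Fin M → ℝ) (hw0 : ∀ i, w 0 i = 1)
    (hupd : ∀ t : Fin T, ∀ i : Fin M,
      w ((t : ℕ) + 1) i =
        if i ∈ E t then
          w (t : ℕ) i * Real.exp (-η * loss t (yhat t i)) *
            (∑ j ∈ E t, w (t : ℕ) j) /
            (∑ j ∈ E t, w (t : ℕ) j * Real.exp (-η * loss t (yhat t j)))
        else w (t : ℕ) i)
    -- aggregated prediction of the algorithm
    (p : Fin T → ℝ)
    (hp : ∀ t : Fin T,
      p t = (∑ i ∈ E t, w (t : ℕ) i * yhat t i) / (∑ i ∈ E t, w (t : ℕ) i))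
    -- the set of experts ever awake (of cardinality M_T)
    (A : Finset (Fin M)) (hA : A = Finset.univ.biUnion E)
    -- S: the leaves of a pruning, exactly one awake at each round
    (S : Finset (Fin M)) (hSA : S ⊆ A) (hS : S.Nonempty)
    (it : Fin T → Fin M) (hit : ∀ t : Fin T, E t ∩ S = {it t}) :
    ∑ t : Fin T, (loss t (p t) - loss t (yhat t (it t)))
      ≤ ((S.card : ℝ) / η) * Real.log ((A.card : ℝ) / (S.card : ℝ)) := by
  classical
  have hEA : ∀ t : Fin T, E t ⊆ A := by
    intro t i hi
    rw [hA]
    exact Finset.mem_biUnion.2 ⟨t, Finset.mem_univ t, hi⟩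
  -- positivity of weights
  have hpos : ∀ t : ℕ, t ≤ T → ∀ i, 0 < w t i := by
    intro t
    induction t with
    | zero => intro _ i; rw [hw0]; norm_num
    | succ t ih =>
      intro ht i
      have htT : t < T := ht
      have ih' := ih (le_of_lt htT)
      have hW : 0 < ∑ j ∈ E ⟨t, htT⟩, w t j :=
        Finset.sum_pos (fun j _ => ih' j) (hE _)
      have hZ : 0 < ∑ j ∈ E ⟨t, htT⟩, w t j * Real.exp (-η * loss ⟨t, htT⟩ (yhat ⟨t, htT⟩ j)) :=
        Finset.sum_pos (fun j _ => mul_pos (ih' j) (Real.exp_pos _)) (hE _)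
      rw [hupd ⟨t, htT⟩ i]
      by_cases hi : i ∈ E ⟨t, htT⟩
      · rw [if_pos hi]
        exact div_pos (mul_pos (mul_pos (ih' i) (Real.exp_pos _)) hW) hZ
      · rw [if_neg hi]; exact ih' i
  -- total weight over A is preserved
  have hsum : ∀ t : ℕ, t ≤ T → ∑ i ∈ A, w t i = (A.card : ℝ) := by
    intro t
    induction t with
    | zero => intro _; simp [hw0]
    | succ t ih =>
      intro ht
      have htT : t < T := ht
      have ih' := ih (le_of_lt htT)
      set t' : Fin T := ⟨t, htT⟩ with ht'
      have hposT := hpos t (le_of_lt htT)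
      have hZ : 0 < ∑ j ∈ E t', w t j * Real.exp (-η * loss t' (yhat t' j)) :=
        Finset.sum_pos (fun j _ => mul_pos (hposT j) (Real.exp_pos _)) (hE _)
      have hsplit : ∀ f : Fin M → ℝ, ∑ i ∈ A, f i = ∑ i ∈ E t', f i + ∑ i ∈ A \ E t', f i := by
        intro f
        rw [← Finset.sum_inter_add_sum_sdiff A (E t') f, Finset.inter_eq_right.2 (hEA t')]
      have key : ∑ i ∈ E t', w (t + 1) i = ∑ i ∈ E t', w t i := by
        calc ∑ i ∈ E t', w (t + 1) i
            = ∑ i ∈ E t', (w t i * Real.exp (-η * loss t' (yhat t' i))) *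
                ((∑ j ∈ E t', w t j) /
                  (∑ j ∈ E t', w t j * Real.exp (-η * loss t' (yhat t' j)))) := by
              refine Finset.sum_congr rfl fun i hi => ?_
              rw [hupd t' i, if_pos hi, mul_div_assoc]
          _ = (∑ i ∈ E t', w t i * Real.exp (-η * loss t' (yhat t' i))) *
                ((∑ j ∈ E t', w t j) /
                  (∑ j ∈ E t', w t j * Real.exp (-η * loss t' (yhat t' j)))) := by
              rw [Finset.sum_mul]
          _ = ∑ i ∈ E t', w t i := by
              rw [mul_comm, div_mul_cancel₀ _ hZ.ne']
      have key2 : ∑ i ∈ A \ E t', w (t + 1) i = ∑ i ∈ A \ E t', w t i := by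
        refine Finset.sum_congr rfl fun i hi => ?_
        rw [hupd t' i, if_neg (Finset.mem_sdiff.1 hi).2]
      rw [hsplit (w (t + 1)), key, key2, ← hsplit (w t), ih']
  -- the leaf expert is awake and in S
  have hitE : ∀ t : Fin T, it t ∈ E t := by
    intro t
    have h : it t ∈ E t ∩ S := by rw [hit t]; exact Finset.mem_singleton_self _
    exact Finset.mem_of_mem_inter_left h
  have hitS : ∀ t : Fin T, it t ∈ S := by
    intro t
    have h : it t ∈ E t ∩ S := by rw [hit t]; exact Finset.mem_singleton_self _
    exact Finset.mem_of_mem_inter_right h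
  -- per-round inequality
  have hround : ∀ t : Fin T,
      loss t (p t) - loss t (yhat t (it t)) ≤
        (1 / η) * (Real.log (w ((t : ℕ) + 1) (it t)) - Real.log (w (t : ℕ) (it t))) := by
    intro t
    have htT : (t : ℕ) < T := t.2
    have hposT := hpos (t : ℕ) (le_of_lt htT)
    have hW : 0 < ∑ j ∈ E t, w (t : ℕ) j := Finset.sum_pos (fun j _ => hposT j) (hE _)
    have hZ : 0 < ∑ j ∈ E t, w (t : ℕ) j * Real.exp (-η * loss t (yhat t j)) :=
      Finset.sum_pos (fun j _ => mul_pos (hposT j) (Real.exp_pos _)) (hE _)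
    set W := ∑ j ∈ E t, w (t : ℕ) j with hWdef
    set Z := ∑ j ∈ E t, w (t : ℕ) j * Real.exp (-η * loss t (yhat t j)) with hZdef
    -- Jensen: Z / W ≤ exp (-η * loss t (p t))
    have hjen : Z / W ≤ Real.exp (-η * loss t (p t)) := by
      have h1 : ∑ i ∈ E t, (w (t : ℕ) i / W) • Real.exp (-η * loss t (yhat t i)) ≤
          Real.exp (-η * loss t (∑ i ∈ E t, (w (t : ℕ) i / W) • yhat t i)) := by
        refine (hconc t).le_map_sum (fun i _ => div_nonneg (hposT i).le hW.le) ?_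
          (fun i hi => hyhatC t i hi)
        rw [← Finset.sum_div, div_self hW.ne']
      have h2 : ∑ i ∈ E t, (w (t : ℕ) i / W) • yhat t i = p t := by
        rw [hp t, Finset.sum_div]
        refine Finset.sum_congr rfl fun i _ => ?_
        rw [smul_eq_mul, div_mul_eq_mul_div]
      have h3 : ∑ i ∈ E t, (w (t : ℕ) i / W) • Real.exp (-η * loss t (yhat t i)) = Z / W := by
        rw [hZdef, Finset.sum_div]
        refine Finset.sum_congr rfl fun i _ => ?_
        rw [smul_eq_mul, div_mul_eq_mul_div]
      rw [h2, h3] at h1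
      exact h1
    have hlog : Real.log Z - Real.log W ≤ -η * loss t (p t) := by
      have h4 : Real.log (Z / W) ≤ Real.log (Real.exp (-η * loss t (p t))) :=
        Real.log_le_log (div_pos hZ hW) hjen
      rwa [Real.log_div hZ.ne' hW.ne', Real.log_exp] at h4
    have hwit : w ((t : ℕ) + 1) (it t) =
        w (t : ℕ) (it t) * Real.exp (-η * loss t (yhat t (it t))) * W / Z := by
      rw [hupd t (it t), if_pos (hitE t)]
    have hlogw : Real.log (w ((t : ℕ) + 1) (it t)) =
        Real.log (w (t : ℕ) (it t)) + (-η * loss t (yhat t (it t))) +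
          Real.log W - Real.log Z := by
      rw [hwit, Real.log_div (mul_pos (mul_pos (hposT _) (Real.exp_pos _)) hW).ne' hZ.ne',
        Real.log_mul (mul_pos (hposT _) (Real.exp_pos _)).ne' hW.ne',
        Real.log_mul (hposT (it t)).ne' (Real.exp_pos _).ne', Real.log_exp]
    rw [hlogw, one_div_mul_eq_div, le_div_iff₀ hη]
    nlinarith [hlog]
  -- sum the per-round inequalities
  have hsum1 : ∑ t : Fin T, (loss t (p t) - loss t (yhat t (it t))) ≤
      (1 / η) * ∑ t : Fin T,
        (Real.log (w ((t : ℕ) + 1) (it t)) - Real.log (w (t : ℕ) (it t))) := by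
    rw [Finset.mul_sum]
    exact Finset.sum_le_sum fun t _ => hround t
  -- telescoping over S
  have htele : ∑ t : Fin T,
      (Real.log (w ((t : ℕ) + 1) (it t)) - Real.log (w (t : ℕ) (it t))) =
      ∑ i ∈ S, Real.log (w T i) := by
    have hswap : ∀ t : Fin T,
        Real.log (w ((t : ℕ) + 1) (it t)) - Real.log (w (t : ℕ) (it t)) =
        ∑ i ∈ S, (Real.log (w ((t : ℕ) + 1) i) - Real.log (w (t : ℕ) i)) := by
      intro t
      rw [Finset.sum_eq_single (it t)]
      · intro i hiS hne
        have hiE : i ∉ E t := by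
          intro hiE
          exact hne (Finset.mem_singleton.1
            (by rw [← hit t]; exact Finset.mem_inter.2 ⟨hiE, hiS⟩))
        rw [hupd t i, if_neg hiE, sub_self]
      · intro h; exact absurd (hitS t) h
    calc ∑ t : Fin T, (Real.log (w ((t : ℕ) + 1) (it t)) - Real.log (w (t : ℕ) (it t)))
        = ∑ t : Fin T, ∑ i ∈ S, (Real.log (w ((t : ℕ) + 1) i) - Real.log (w (t : ℕ) i)) :=
          Finset.sum_congr rfl fun t _ => hswap t
      _ = ∑ i ∈ S, ∑ t : Fin T, (Real.log (w ((t : ℕ) + 1) i) - Real.log (w (t : ℕ) i)) :=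
          Finset.sum_comm
      _ = ∑ i ∈ S, Real.log (w T i) := by
          refine Finset.sum_congr rfl fun i _ => ?_
          rw [Fin.sum_univ_eq_sum_range
            (fun n => Real.log (w (n + 1) i) - Real.log (w n i)) T,
            Finset.sum_range_sub (fun n => Real.log (w n i)), hw0, Real.log_one, sub_zero]
  -- Jensen for log over S
  have hScard : (0 : ℝ) < S.card := by exact_mod_cast hS.card_pos
  have hposTfin := hpos T le_rfl
  have hSW : 0 < ∑ i ∈ S, w T i := Finset.sum_pos (fun i _ => hposTfin i) hS
  have hlogS : ∑ i ∈ S, Real.log (w T i) ≤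
      (S.card : ℝ) * Real.log ((∑ i ∈ S, w T i) / (S.card : ℝ)) := by
    have hconcl : ConcaveOn ℝ (Set.Ioi (0 : ℝ)) Real.log := strictConcaveOn_log_Ioi.concaveOn
    have h1 : ∑ i ∈ S, ((S.card : ℝ))⁻¹ • Real.log (w T i) ≤
        Real.log (∑ i ∈ S, ((S.card : ℝ))⁻¹ • w T i) := by
      refine hconcl.le_map_sum (fun i _ => by positivity) ?_ (fun i _ => hposTfin i)
      rw [Finset.sum_const, nsmul_eq_mul, mul_inv_cancel₀ hScard.ne']
    simp only [smul_eq_mul] at h1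
    rw [← Finset.mul_sum, ← Finset.mul_sum] at h1
    have h2 : (S.card : ℝ)⁻¹ * ∑ i ∈ S, w T i = (∑ i ∈ S, w T i) / (S.card : ℝ) :=
      inv_mul_eq_div _ _
    rw [h2] at h1
    calc ∑ i ∈ S, Real.log (w T i)
        = (S.card : ℝ) * ((S.card : ℝ)⁻¹ * ∑ i ∈ S, Real.log (w T i)) := by
          rw [← mul_assoc, mul_inv_cancel₀ hScard.ne', one_mul]
      _ ≤ (S.card : ℝ) * Real.log ((∑ i ∈ S, w T i) / (S.card : ℝ)) :=
          mul_le_mul_of_nonneg_left h1 hScard.le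
  -- sum over S is at most |A|
  have hSA' : ∑ i ∈ S, w T i ≤ (A.card : ℝ) := by
    rw [← hsum T le_rfl]
    exact Finset.sum_le_sum_of_subset_of_nonneg hSA (fun i _ _ => (hposTfin i).le)
  have hlogmono : Real.log ((∑ i ∈ S, w T i) / (S.card : ℝ)) ≤
      Real.log ((A.card : ℝ) / (S.card : ℝ)) :=
    Real.log_le_log (div_pos hSW hScard) (by gcongr)
  calc ∑ t : Fin T, (loss t (p t) - loss t (yhat t (it t)))
      ≤ (1 / η) * ∑ t : Fin T,
          (Real.log (w ((t : ℕ) + 1) (it t)) - Real.log (w (t : ℕ) (it t))) := hsum1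
    _ = (1 / η) * ∑ i ∈ S, Real.log (w T i) := by rw [htele]
    _ ≤ (1 / η) * ((S.card : ℝ) * Real.log ((A.card : ℝ) / (S.card : ℝ))) := by
        refine mul_le_mul_of_nonneg_left ?_ (by positivity)
        exact hlogS.trans (mul_le_mul_of_nonneg_left hlogmono hScard.le)
    _ = ((S.card : ℝ) / η) * Real.log ((A.card : ℝ) / (S.card : ℝ)) := by ring
end

section
/- Let T be a number of rounds, let ℓ_1, …, ℓ_T : ℝ → ℝ be loss functions each L'-Lipschitz (|ℓ_t(a) − ℓ_t(b)| ≤ L'·|a − b| for all a, b ∈ ℝ), let ŷ_1, …, ŷ_T ∈ ℝ be the algorithm's predictions, and let x_1, …, x_T be the observed instances in a set 𝒳. Let I be a finite index set and let {T_i}_{i ∈ I} be a partition of {1, …, T}; for each i ∈ I let x_i ∈ 𝒳 be a center, let ŷ_{i,t} ∈ ℝ for t ∈ T_i be the local predictions at node i, and let y*_i ∈ ℝ be a value satisfying Σ_{t ∈ T_i} ℓ_t(y*_i) ≤ Σ_{t ∈ T_i} ℓ_t(f(x_i)), where f : 𝒳 → ℝ is an arbitrary comparator. Define the pruning prediction f_{E,t}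 = ŷ_{i(t),t}, where i(t) is the unique index with t ∈ T_{i(t)}. Then Σ_{t=1}^T ( ℓ_t(ŷ_t) − ℓ_t(f(x_t)) ) ≤ Σ_{t=1}^T ( ℓ_t(ŷ_t) − ℓ_t(f_{E,t}) ) + Σ_{i ∈ I} Σ_{t ∈ T_i} ( ℓ_t(ŷ_{i,t}) − ℓ_t(y*_i) ) + L' · Σ_{i ∈ I} Σ_{t ∈ T_i} | f(x_i) − f(x_t) |. -/
/-!
STATEMENT 4: Master regret decomposition for locally adaptive nonparametric
online learning: regret against f ≤ regret against the pruning
+ local (estimation) regret + Lipschitz approximation error.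
-/

open Finset

theorem master_regret_decomposition
    {X : Type*} {ι : Type*} [DecidableEq ι]
    (T : ℕ) (loss : Fin T → ℝ → ℝ) (L' : ℝ)
    (hLip : ∀ t : Fin T, ∀ a b : ℝ, |loss t a - loss t b| ≤ L' * |a - b|)
    -- algorithm predictions and observed instances
    (yhat : Fin T → ℝ) (x : Fin T → X)
    -- finite index set of leaves and their activity times, forming a partition
    (I : Finset ι) (Ti : ι → Finset (Fin T))
    (idx : Fin T → ι) (hidxI : ∀ t, idx t ∈ I) (hidx : ∀ t, t ∈ Ti (idx t))
    (hdisj : ∀ i ∈ I, ∀ j ∈ I, i ≠ j → Disjoint (Ti i) (Ti j))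
    -- centers, local predictions, local comparators and comparator function
    (c : ι → X) (yloc : ι → Fin T → ℝ) (ystar : ι → ℝ) (f : X → ℝ)
    (hstar : ∀ i ∈ I, ∑ t ∈ Ti i, loss t (ystar i) ≤ ∑ t ∈ Ti i, loss t (f (c i))) :
    ∑ t : Fin T, (loss t (yhat t) - loss t (f (x t)))
      ≤ ∑ t : Fin T, (loss t (yhat t) - loss t (yloc (idx t) t))
        + ∑ i ∈ I, ∑ t ∈ Ti i, (loss t (yloc i t) - loss t (ystar i))
        + L' * ∑ i ∈ I, ∑ t ∈ Ti i, |f (c i) - f (x t)| := by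
  classical
  have hcover : (Finset.univ : Finset (Fin T)) = I.biUnion Ti := by
    ext t
    simp only [Finset.mem_univ, Finset.mem_biUnion, true_iff]
    exact ⟨idx t, hidxI t, hidx t⟩
  have hsum : ∀ g : Fin T → ℝ, ∑ t : Fin T, g t = ∑ i ∈ I, ∑ t ∈ Ti i, g t := by
    intro g
    rw [hcover, Finset.sum_biUnion]
    exact fun i hi j hj hij => hdisj i hi j hj hij
  have hidxeq : ∀ i ∈ I, ∀ t ∈ Ti i, idx t = i := by
    intro i hi t ht
    by_contra h
    exact Finset.disjoint_left.mp (hdisj (idx t) (hidxI t) i hi h) (hidx t) ht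
  rw [hsum (fun t => loss t (yhat t) - loss t (f (x t))),
      hsum (fun t => loss t (yhat t) - loss t (yloc (idx t) t)),
      Finset.mul_sum, ← Finset.sum_add_distrib, ← Finset.sum_add_distrib]
  apply Finset.sum_le_sum
  intro i hi
  have h1 : ∑ t ∈ Ti i, (loss t (yhat t) - loss t (yloc (idx t) t))
      = ∑ t ∈ Ti i, (loss t (yhat t) - loss t (yloc i t)) := by
    apply Finset.sum_congr rfl
    intro t ht
    rw [hidxeq i hi t ht]
  rw [h1]
  have h2 : ∑ t ∈ Ti i, (loss t (f (c i)) - loss t (f (x t)))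
      ≤ L' * ∑ t ∈ Ti i, |f (c i) - f (x t)| := by
    rw [Finset.mul_sum]
    apply Finset.sum_le_sum
    intro t ht
    exact (le_abs_self _).trans (hLip t _ _)
  have h3 := hstar i hi
  have e1 : ∑ t ∈ Ti i, (loss t (yhat t) - loss t (f (x t)))
      = ∑ t ∈ Ti i, (loss t (yhat t) - loss t (yloc i t))
        + ∑ t ∈ Ti i, (loss t (yloc i t) - loss t (ystar i))
        + (∑ t ∈ Ti i, loss t (ystar i) - ∑ t ∈ Ti i, loss t (f (x t))) := by
    simp [Finset.sum_sub_distrib]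
  have e2 : ∑ t ∈ Ti i, (loss t (f (c i)) - loss t (f (x t)))
      = ∑ t ∈ Ti i, loss t (f (c i)) - ∑ t ∈ Ti i, loss t (f (x t)) := by
    rw [Finset.sum_sub_distrib]
  linarith
end
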